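/- Let 𝒥 be a real matrix and let ℒ = {Y ∈ M(n,ℝ) : exp(Y) = 𝒥_M and Y is similar to 𝒥}, where exp(𝒥) = 𝒥_M. Then ℒ is closed in GL(n,ℝ) (equivalently, in M(n,ℝ)): if a sequence Y_i ∈ ℒ converges to Y, then exp(Y) = 𝒥_M and Y has the same characteristic polynomial as 𝒥, and since all such Y with exp(Y) = 𝒥_M are semi-simple (𝒥_M being semi-simple), Y ∈ ℒ. -/

import Mathlib

open Matrix

/-- A real square matrix is semi-simple if it is diagonalizable over `ℂ`. -/
def Matrix.IsSemisimpleR {n : ℕ} (A : Matrix (Fin n) (Fin n) ℝ) : Prop :=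
  ∃ (P : Matrix (Fin n) (Fin n) ℂ) (d : Fin n → ℂ),
    IsUnit P.det ∧ A.map (fun x => (x : ℂ)) = P * Matrix.diagonal d * P⁻¹

/-!
The set is `exp ⁻¹' {JM} ∩ {Y | Y.charpoly = J.charpoly}`, an intersection of two closed sets. The
nontrivial inclusion says that a real logarithm `Y` of `JM` with the characteristic polynomial of
`J` is conjugate to `J`. Such a `Y` is semisimple: writing `Y = N + S` (Jordan–Chevalley),
`exp Y = exp S + (exp N - 1) * exp S` is again a decomposition into a semisimple part and a
commuting nilpotent part, so by uniqueness `exp N = 1`, whence `N = 0`. Over `ℂ`, `Y` and `J` are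
then conjugate to diagonal matrices with the same diagonal up to order. Conjugacy descends to `ℝ`:
if `Q + i R` intertwines two real matrices, so does `Q + t R` for each real `t`, and `det (Q + t R)`
is a real polynomial in `t` that does not vanish at `t = i`.
-/

open Polynomial NormedSpace

theorem Function.exists_perm_comp_eq_of_map_univ_eq {n α : Type*} [Fintype n] [DecidableEq α]
    {f g : n → α} (h : Finset.univ.val.map f = Finset.univ.val.map g) :
    ∃ σ : Equiv.Perm n, f ∘ σ = g := by
  have hcard (a : α) : Fintype.card {i // g i = a} = Fintype.card {i // f i = a} := by
    simpa [Multiset.count_map, Fintype.card_subtype, Finset.card_def, eq_comm]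
      using congrArg (Multiset.count a) h.symm
  exact ⟨Equiv.ofFiberEquiv fun a => Fintype.equivOfCardEq (hcard a),
    funext (Equiv.ofFiberEquiv_map _)⟩

theorem Module.End.exists_basis_apply_eq_smul_of_iSup_eigenspace_eq_top {K V ι : Type*} [Field K]
    [AddCommGroup V] [Module K V] [Fintype ι] (b₀ : Module.Basis ι K V) {f : Module.End K V}
    (hf : ⨆ μ, f.eigenspace μ = ⊤) :
    ∃ (b : Module.Basis ι K V) (d : ι → K), ∀ i, f (b i) = d i • b i := by
  classical
  have hint : DirectSum.IsInternal f.eigenspace :=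
    (DirectSum.isInternal_submodule_iff_iSupIndep_and_iSup_eq_top _).mpr
      ⟨f.eigenspaces_iSupIndep, hf⟩
  let b := hint.collectedBasis fun μ => Module.Free.chooseBasis K (f.eigenspace μ)
  let e := b.indexEquiv b₀
  refine ⟨b.reindex e, fun i => (e.symm i).1, fun i => ?_⟩
  rw [Module.Basis.reindex_apply, ← Module.End.mem_eigenspace_iff]
  exact hint.collectedBasis_mem _ _

theorem IsNilpotent.eq_zero_of_exp_eq_one {A : Type*} [Ring A] [Algebra ℚ A] {a : A}
    (ha : IsNilpotent a) (h : IsNilpotent.exp a = 1) : a = 0 := by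
  obtain ⟨k, hk⟩ := ha
  set c := ∑ i ∈ Finset.range k, ((i + 2).factorial : ℚ)⁻¹ • a ^ i
  have hac : Commute a c :=
    Commute.sum_right _ _ _ fun i _ => ((Commute.refl a).pow_right i).smul_right _
  have hexp : IsNilpotent.exp a = 1 + a * (1 + a * c) := by
    rw [IsNilpotent.exp_eq_sum (pow_eq_zero_of_le (k.le_add_right 2) hk),
      Finset.sum_range_succ', Finset.sum_range_succ']
    simp only [c, pow_succ', zero_add, Nat.factorial_one, Nat.cast_one, inv_one, pow_zero,
      mul_one, one_smul, Nat.factorial_zero, Finset.mul_sum, Algebra.mul_smul_comm, mul_add]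
    abel
  have hunit : IsUnit (1 + a * c) := (hac.isNilpotent_mul_right ⟨k, hk⟩).isUnit_one_add
  rw [hexp, add_eq_left] at h
  exact hunit.mul_left_eq_zero.mp h

namespace NormedSpace

theorem exp_eq_isNilpotent_exp {𝔸 : Type*} [Ring 𝔸] [Algebra ℚ 𝔸] [TopologicalSpace 𝔸]
    [IsTopologicalRing 𝔸] {a : 𝔸} (ha : IsNilpotent a) : exp a = IsNilpotent.exp a := by
  obtain ⟨k, hk⟩ := ha
  rw [exp_eq_tsum_rat, IsNilpotent.exp_eq_sum hk]
  exact tsum_eq_sum fun i hi => by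
    rw [pow_eq_zero_of_le (not_lt.mp (Finset.mem_range.not.mp hi)) hk, smul_zero]

theorem exp_mem_adjoin_singleton {𝕜 𝔸 : Type*} [NontriviallyNormedField 𝕜] [CompleteSpace 𝕜]
    [Ring 𝔸] [Algebra 𝕜 𝔸] [Algebra ℚ 𝔸] [SMul ℚ 𝕜] [IsScalarTower ℚ 𝕜 𝔸] [TopologicalSpace 𝔸]
    [IsTopologicalRing 𝔸] [ContinuousSMul 𝕜 𝔸] [T2Space 𝔸] [FiniteDimensional 𝕜 𝔸] (x : 𝔸) :
    exp x ∈ Algebra.adjoin 𝕜 {x} :=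
  exp_mem (R := 𝕜) (s := Algebra.adjoin 𝕜 {x})
    (Subalgebra.toSubmodule (Algebra.adjoin 𝕜 {x})).closed_of_finiteDimensional
    (Algebra.self_mem_adjoin_singleton 𝕜 x)

end NormedSpace

namespace Matrix

section

variable {n R K : Type*} [Fintype n] [DecidableEq n]

section CommRing

variable [CommRing R]

theorem isConj_iff_exists_isUnit_det {A B : Matrix n n R} :
    IsConj A B ↔ ∃ P : Matrix n n R, IsUnit P.det ∧ B = P * A * P⁻¹ := by
  constructor
  · rintro ⟨c, hc⟩
    refine ⟨c, (isUnit_iff_isUnit_det _).mp c.isUnit, ?_⟩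
    rw [hc.eq, Matrix.mul_assoc, ← coe_units_inv, Units.mul_inv, Matrix.mul_one]
  · rintro ⟨P, hP, rfl⟩
    obtain ⟨c, rfl⟩ := (isUnit_iff_isUnit_det P).mpr hP
    refine ⟨c, ?_⟩
    rw [SemiconjBy, Matrix.mul_assoc _ _ (c : Matrix n n R), ← coe_units_inv, Units.inv_mul,
      Matrix.mul_one]

theorem IsConj.charpoly_eq {A B : Matrix n n R} (h : IsConj A B) : A.charpoly = B.charpoly := by
  obtain ⟨c, hc⟩ := h
  rw [← charpoly_units_conj c A, hc.eq, Matrix.mul_assoc, ← coe_units_inv, Units.mul_inv,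
    Matrix.mul_one]

theorem isConj_diagonal_comp_perm (d : n → R) (σ : Equiv.Perm n) :
    IsConj (diagonal d) (diagonal (d ∘ σ)) := by
  have hinv : σ.permMatrix R * σ⁻¹.permMatrix R = 1 := by
    rw [← permMatrix_mul, inv_mul_cancel, permMatrix_one]
  obtain ⟨c, hc⟩ := (isUnit_iff_isUnit_det _).mpr (isUnit_det_of_right_inverse hinv)
  refine ⟨c, ?_⟩
  rw [SemiconjBy, hc]
  ext i j
  rw [Equiv.Perm.permMatrix, PEquiv.toMatrix_toPEquiv_mul,
    PEquiv.mul_toMatrix_toPEquiv]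
  simp only [submatrix_apply, id, diagonal_apply, Function.comp_apply, Equiv.eq_symm_apply]

theorem roots_charpoly_diagonal [IsDomain R] (d : n → R) :
    (diagonal d).charpoly.roots = Finset.univ.val.map d := by
  rw [charpoly_diagonal, Finset.prod_eq_multiset_prod,
    ← roots_multiset_prod_X_sub_C (Finset.univ.val.map d), Multiset.map_map]
  rfl

def IsDiagonalizable (A : Matrix n n R) : Prop :=
  ∃ d : n → R, IsConj (diagonal d) A

theorem isConj_diagonal_of_charpoly_eq [IsDomain R] {d e : n → R}
    (h : (diagonal d).charpoly = (diagonal e).charpoly) : IsConj (diagonal d) (diagonal e) := by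
  classical
  obtain ⟨σ, rfl⟩ : ∃ σ : Equiv.Perm n, d ∘ σ = e := by
    apply Function.exists_perm_comp_eq_of_map_univ_eq
    rw [← roots_charpoly_diagonal d, ← roots_charpoly_diagonal e, h]
  exact isConj_diagonal_comp_perm d σ

theorem IsDiagonalizable.isConj_of_charpoly_eq [IsDomain R] {A B : Matrix n n R}
    (hA : A.IsDiagonalizable) (hB : B.IsDiagonalizable) (h : A.charpoly = B.charpoly) :
    IsConj A B := by
  obtain ⟨d, hd⟩ := hA
  obtain ⟨e, he⟩ := hB
  refine hd.symm.trans ((isConj_diagonal_of_charpoly_eq ?_).trans he)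
  rw [hd.charpoly_eq, he.charpoly_eq, h]

theorem IsConj.isSemisimple_toLinAlgEquiv'_iff {A B : Matrix n n R} (h : IsConj A B) :
    Module.End.IsSemisimple (toLinAlgEquiv' A) ↔ Module.End.IsSemisimple (toLinAlgEquiv' B) := by
  obtain ⟨c, hc⟩ := h
  refine LinearEquiv.isSemisimple_iff (toLinAlgEquiv' A) (toLinAlgEquiv' B)
    (toLinearEquiv' c c.invertible) ?_
  change toLin' (c : Matrix n n R) ∘ₗ toLin' A = toLin' B ∘ₗ toLin' (c : Matrix n n R)
  rw [← toLin'_mul, ← toLin'_mul, hc.eq]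

theorem isClosed_setOf_charpoly_eq [IsDomain R] [Infinite R] [TopologicalSpace R]
    [IsTopologicalRing R] [T1Space R] (p : R[X]) :
    IsClosed {A : Matrix n n R | A.charpoly = p} := by
  have hset : {A : Matrix n n R | A.charpoly = p} =
      ⋂ t : R, (fun A => (scalar n t - A).det) ⁻¹' {p.eval t} := by
    ext A
    simp only [Set.mem_ofPred_eq, Set.mem_iInter, Set.mem_preimage, Set.mem_singleton_iff,
      ← eval_charpoly]
    exact ⟨fun h t => h ▸ rfl, Polynomial.funext⟩
  rw [hset]
  exact isClosed_iInter fun t =>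
    isClosed_singleton.preimage (continuous_const.sub continuous_id).matrix_det

end CommRing

section Field

variable [Field K]

theorem isSemisimple_toLinAlgEquiv'_diagonal (d : n → K) :
    Module.End.IsSemisimple (toLinAlgEquiv' (diagonal d)) := by
  classical
  let p : K[X] := ∏ μ ∈ Finset.univ.image d, (X - C μ)
  refine Module.End.isSemisimple_of_squarefree_aeval_eq_zero (p := p)
    (separable_prod_X_sub_C_iff'.mpr fun _ _ _ _ => id).squarefree ?_
  have hp : aeval (diagonal d) p = 0 := by
    rw [← diagonalAlgHom_apply (R := K), aeval_algHom_apply, aeval_pi_apply]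
    convert map_zero (diagonalAlgHom K (n := n) (α := K)) with i
    simpa [p, Finset.prod_eq_zero_iff] using ⟨i, sub_self _⟩
  rw [aeval_algEquiv, AlgHom.comp_apply, hp, map_zero]

theorem IsDiagonalizable.isSemisimple_toLinAlgEquiv' {A : Matrix n n K} (hA : A.IsDiagonalizable) :
    Module.End.IsSemisimple (toLinAlgEquiv' A) := by
  obtain ⟨d, hd⟩ := hA
  exact hd.isSemisimple_toLinAlgEquiv'_iff.mp (isSemisimple_toLinAlgEquiv'_diagonal d)

theorem isDiagonalizable_of_mulVec_basis_eq_smul {A : Matrix n n K} (b : Module.Basis n K (n → K))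
    (d : n → K) (hb : ∀ i, A *ᵥ b i = d i • b i) : A.IsDiagonalizable := by
  let := (Pi.basisFun K n).invertibleToMatrix b
  obtain ⟨c, hc⟩ := isUnit_of_invertible ((Pi.basisFun K n).toMatrix b)
  refine ⟨d, c, ?_⟩
  rw [SemiconjBy, hc]
  ext i j
  have hcol := congrFun (hb j) i
  simp only [mulVec, dotProduct, Pi.smul_apply, smul_eq_mul] at hcol
  rw [mul_diagonal, Matrix.mul_apply]
  simp only [Module.Basis.toMatrix_apply, Pi.basisFun_repr]
  rw [hcol, mul_comm]

theorem isDiagonalizable_of_isSemisimple_toLinAlgEquiv' [IsAlgClosed K] {A : Matrix n n K}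
    (hA : Module.End.IsSemisimple (toLinAlgEquiv' A)) : A.IsDiagonalizable := by
  obtain ⟨b, d, hb⟩ := Module.End.exists_basis_apply_eq_smul_of_iSup_eigenspace_eq_top
    (Pi.basisFun K n) hA.iSup_eigenspace_eq_top
  exact isDiagonalizable_of_mulVec_basis_eq_smul b d hb

theorem exists_isNilpotent_isSemisimple_toLinAlgEquiv' [PerfectField K]
    (A : Matrix n n K) :
    ∃ N S : Matrix n n K, Commute N S ∧ IsNilpotent N ∧
      Module.End.IsSemisimple (toLinAlgEquiv' S) ∧ A = N + S := by
  obtain ⟨N, hN, S, hS, hNnil, hSss, hA⟩ :=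
    Module.End.exists_isNilpotent_isSemisimple (f := toLinAlgEquiv' A)
  have hNS : Commute N S := Algebra.commute_of_mem_adjoin_singleton_of_commute hS
    (Algebra.commute_of_mem_adjoin_singleton_of_commute hN rfl).symm
  refine ⟨toLinAlgEquiv'.symm N, toLinAlgEquiv'.symm S, hNS.map _, hNnil.map _, ?_, ?_⟩
  · rwa [AlgEquiv.apply_symm_apply]
  · rw [← map_add, ← hA, AlgEquiv.symm_apply_apply]

end Field

section RCLike

variable {𝕂 : Type*} [RCLike 𝕂]

theorem isSemisimple_toLinAlgEquiv'_exp {S : Matrix n n 𝕂}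
    (hS : Module.End.IsSemisimple (toLinAlgEquiv' S)) :
    Module.End.IsSemisimple (toLinAlgEquiv' (exp S)) := by
  refine hS.of_mem_adjoin_singleton ?_
  have hmap := AlgHom.map_adjoin_singleton (toLinAlgEquiv' : Matrix n n 𝕂 ≃ₐ[𝕂] _).toAlgHom S
  rw [AlgEquiv.coe_toAlgHom] at hmap
  exact hmap ▸ Subalgebra.mem_map.mpr ⟨_, exp_mem_adjoin_singleton S, rfl⟩

theorem isSemisimple_toLinAlgEquiv'_of_exp {A : Matrix n n 𝕂}
    (h : Module.End.IsSemisimple (toLinAlgEquiv' (exp A))) :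
    Module.End.IsSemisimple (toLinAlgEquiv' A) := by
  obtain ⟨N, S, hNS, hN, hS, rfl⟩ := exists_isNilpotent_isSemisimple_toLinAlgEquiv' A
  have hU : IsNilpotent (exp N - 1) :=
    exp_eq_isNilpotent_exp hN ▸ IsNilpotent.isNilpotent_exp_sub_one hN
  have hUS : Commute (exp N - 1) (exp S) := hNS.exp.sub_left (Commute.one_left _)
  have hsplit : exp (N + S) = (exp N - 1) * exp S + exp S := by
    rw [exp_add_of_commute _ _ hNS, sub_mul, one_mul, sub_add_cancel]
  have hzero : (exp N - 1) * exp S = 0 := by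
    have := Module.End.isNilpotent_isSemisimple_unique
      ((hUS.isNilpotent_mul_right hU).map toLinAlgEquiv') (isSemisimple_toLinAlgEquiv'_exp hS)
      IsNilpotent.zero h ((hUS.mul_left (Commute.refl _)).map toLinAlgEquiv')
      (Commute.zero_left _) (by rw [zero_add, ← map_add, ← hsplit])
    exact toLinAlgEquiv'.injective (this.1.trans (map_zero _).symm)
  have hexpN : exp N = 1 := sub_eq_zero.mp ((isUnit_exp S).mul_left_eq_zero.mp hzero)
  rwa [hN.eq_zero_of_exp_eq_one (exp_eq_isNilpotent_exp hN ▸ hexpN), zero_add]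

end RCLike

section Real

theorem exists_isUnit_det_add_smul {Q R : Matrix n n ℝ}
    (h : IsUnit (Q.map ((↑) : ℝ → ℂ) + Complex.I • R.map ((↑) : ℝ → ℂ)).det) :
    ∃ t : ℝ, IsUnit (Q + t • R).det := by
  let p : ℝ[X] := (Q.map C + (X : ℝ[X]) • R.map C).det
  have heval (t : ℝ) : p.eval t = (Q + t • R).det := by
    rw [← coe_evalRingHom, RingHom.map_det]
    congr 1
    ext i j
    simp only [RingHom.mapMatrix_apply, coe_evalRingHom, map_apply, add_apply, smul_apply,
      smul_eq_mul, eval_add, eval_C, eval_mul, eval_X]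
  have hp : p ≠ 0 := by
    intro hp
    have := congrArg (aeval Complex.I) hp
    rw [AlgHom.map_det, map_zero] at this
    refine h.ne_zero (Eq.trans (congrArg det ?_) this)
    ext i j
    simp only [AlgHom.mapMatrix_apply, map_apply, add_apply, smul_apply, smul_eq_mul, map_add,
      map_mul, aeval_C, aeval_X, Complex.coe_algebraMap]
  obtain ⟨t, ht⟩ : ∃ t : ℝ, p.eval t ≠ 0 := by
    by_contra! hzero
    exact hp (Polynomial.funext fun t => by simp [hzero t])
  exact ⟨t, heval t ▸ ht.isUnit⟩

theorem isConj_of_isConj_map_ofReal {A B : Matrix n n ℝ}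
    (h : IsConj (A.map ((↑) : ℝ → ℂ)) (B.map ((↑) : ℝ → ℂ))) : IsConj A B := by
  obtain ⟨c, hc⟩ := h
  set Q := (c : Matrix n n ℂ).map Complex.re
  set R := (c : Matrix n n ℂ).map Complex.im
  have hQ : Q * A = B * Q := by
    ext i j
    simpa [Q, Matrix.mul_apply, Complex.re_sum] using congrArg (fun M => (M i j).re) hc.eq
  have hR : R * A = B * R := by
    ext i j
    simpa [R, Matrix.mul_apply, Complex.im_sum] using congrArg (fun M => (M i j).im) hc.eq
  have hc' : (c : Matrix n n ℂ) = Q.map (↑) + Complex.I • R.map (↑) := by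
    ext i j
    simp only [Q, R, add_apply, map_apply, smul_apply, smul_eq_mul]
    rw [mul_comm, Complex.re_add_im]
  obtain ⟨t, ht⟩ := exists_isUnit_det_add_smul (hc' ▸ (isUnit_iff_isUnit_det _).mp c.isUnit)
  obtain ⟨u, hu⟩ := (isUnit_iff_isUnit_det _).mpr ht
  refine ⟨u, ?_⟩
  rw [SemiconjBy, hu, Matrix.add_mul, Matrix.mul_add, Matrix.smul_mul, Matrix.mul_smul, hQ, hR]

theorem map_ofReal_exp (A : Matrix n n ℝ) :
    (exp A).map ((↑) : ℝ → ℂ) = exp (A.map (↑)) :=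
  open scoped Norms.Operator in
  map_exp Complex.ofRealHom.mapMatrix (continuous_id.matrix_map Complex.continuous_ofReal) A

end Real

end

variable {n : ℕ}

theorem isSemisimpleR_iff (A : Matrix (Fin n) (Fin n) ℝ) :
    A.IsSemisimpleR ↔ (A.map ((↑) : ℝ → ℂ)).IsDiagonalizable := by
  simp only [IsSemisimpleR, IsDiagonalizable, isConj_iff_exists_isUnit_det]
  exact exists_comm

theorem IsSemisimpleR.of_exp {A : Matrix (Fin n) (Fin n) ℝ} (h : (exp A).IsSemisimpleR) :
    A.IsSemisimpleR := by
  rw [isSemisimpleR_iff, map_ofReal_exp] at h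
  rw [isSemisimpleR_iff]
  exact isDiagonalizable_of_isSemisimple_toLinAlgEquiv'
    (isSemisimple_toLinAlgEquiv'_of_exp h.isSemisimple_toLinAlgEquiv')

theorem IsSemisimpleR.isConj_of_charpoly_eq {A B : Matrix (Fin n) (Fin n) ℝ}
    (hA : A.IsSemisimpleR) (hB : B.IsSemisimpleR) (h : A.charpoly = B.charpoly) : IsConj A B := by
  refine isConj_of_isConj_map_ofReal <|
    ((isSemisimpleR_iff A).mp hA).isConj_of_charpoly_eq ((isSemisimpleR_iff B).mp hB) ?_
  exact (charpoly_map A Complex.ofRealHom).trans (h ▸ (charpoly_map B Complex.ofRealHom).symm)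

end Matrix

theorem logs_similar_to_jordan_form_isClosed_general {n : ℕ}
    (JM J : Matrix (Fin n) (Fin n) ℝ)
    (hJMss : JM.IsSemisimpleR) (hJss : J.IsSemisimpleR) :
    IsClosed {Y : Matrix (Fin n) (Fin n) ℝ | NormedSpace.exp Y = JM ∧
      ∃ P : Matrix (Fin n) (Fin n) ℝ, IsUnit P.det ∧ Y = P * J * P⁻¹} := by
  have hset : {Y : Matrix (Fin n) (Fin n) ℝ | exp Y = JM ∧
      ∃ P : Matrix (Fin n) (Fin n) ℝ, IsUnit P.det ∧ Y = P * J * P⁻¹} =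
      exp ⁻¹' {JM} ∩ {Y | Y.charpoly = J.charpoly} := by
    ext Y
    simp only [Set.mem_ofPred_eq, Set.mem_inter_iff, Set.mem_preimage, Set.mem_singleton_iff,
      ← isConj_iff_exists_isUnit_det]
    refine and_congr_right fun hY => ⟨fun hJY => hJY.charpoly_eq.symm, fun hcp => ?_⟩
    exact hJss.isConj_of_charpoly_eq (IsSemisimpleR.of_exp (hY ▸ hJMss)) hcp.symm
  rw [hset]
  open scoped Matrix.Norms.Operator in
  exact (isClosed_singleton.preimage exp_continuous).inter (isClosed_setOf_charpoly_eq _)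

/-- Let `𝒥_M` be semi-simple and `𝒥` a semi-simple real matrix with `exp 𝒥 = 𝒥_M`.
Then the set of real logarithms of `𝒥_M` that are similar to `𝒥` is closed in `M(n,ℝ)`. -/
theorem logs_similar_to_jordan_form_isClosed {n : ℕ}
    (JM J : Matrix (Fin n) (Fin n) ℝ)
    (hJMss : JM.IsSemisimpleR) (hJss : J.IsSemisimpleR)
    (hexp : NormedSpace.exp J = JM) :
    IsClosed {Y : Matrix (Fin n) (Fin n) ℝ | NormedSpace.exp Y = JM ∧
      ∃ P : Matrix (Fin n) (Fin n) ℝ, IsUnit P.det ∧ Y = P * J * P⁻¹} :=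
  logs_similar_to_jordan_form_isClosed_general JM J hJMss hJss
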